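/- For the derivation algebra computation: any derivation D of the symplectic triple (g,σ,Ω̄) (i.e., a Lie algebra derivation commuting with σ and infinitesimally preserving Ω̄ on p) annihilates the central element E^k := (E,E) ∈ Δh; that is, D(E,E) = 0. -/
import Mathlib


/-- The Lie bracket on `g = ℝH ⋉ (h ⊕ h)`, where `h = V ⊕ ℝE` is the Heisenberg
algebra of `(V,Ω)` and `[H, (v,ℓ)⊕(v',ℓ')] = (v,2ℓ)⊕(−v',−2ℓ')`. -/
noncomputable def gbr {V : Type*} [AddCommGroup V] [Module ℝ V]
    (Ω : V →ₗ[ℝ] V →ₗ[ℝ] ℝ) (x y : ℝ × (V × ℝ) × (V × ℝ)) :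
    ℝ × (V × ℝ) × (V × ℝ) :=
  (0,
   (x.1 • y.2.1.1 - y.1 • x.2.1.1,
    2 * (x.1 * y.2.1.2 - y.1 * x.2.1.2) + Ω x.2.1.1 y.2.1.1),
   (-(x.1 • y.2.2.1) + y.1 • x.2.2.1,
    -(2 * (x.1 * y.2.2.2 - y.1 * x.2.2.2)) + Ω x.2.2.1 y.2.2.1))

/-- The involution `σ(aH ⊕ X ⊕ Y) := (−aH) ⊕ Y ⊕ X`. -/
def gsigma {V : Type*} [AddCommGroup V] (x : ℝ × (V × ℝ) × (V × ℝ)) :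
    ℝ × (V × ℝ) × (V × ℝ) :=
  (-x.1, x.2.2, x.2.1)

/-- any derivation `D` of the symplectic triple `(g,σ,Ω̄)` (a Lie algebra
derivation commuting with `σ` and infinitesimally preserving `Ω̄` on the `(−1)`-eigenspace
`p`) annihilates the central element `E^k = (E,E)`. -/
theorem derivation_kills_Ek {V : Type*} [AddCommGroup V] [Module ℝ V]
    (Ω : V →ₗ[ℝ] V →ₗ[ℝ] ℝ) (hΩ : ∀ v w : V, Ω v w = - Ω w v)
    (hnd : ∀ v : V, (∀ w : V, Ω v w = 0) → v = 0) (hV : ∃ v : V, v ≠ 0)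
    (D : (ℝ × (V × ℝ) × (V × ℝ)) →ₗ[ℝ] (ℝ × (V × ℝ) × (V × ℝ)))
    (hder : ∀ x y, D (gbr Ω x y) = gbr Ω (D x) y + gbr Ω x (D y))
    (hσ : ∀ x, D (gsigma x) = gsigma (D x))
    (Ωbar : (ℝ × (V × ℝ) × (V × ℝ)) → (ℝ × (V × ℝ) × (V × ℝ)) → ℝ)
    (hΩbar : ∀ (a : ℝ) (v : V) (l : ℝ) (a' : ℝ) (v' : V) (l' : ℝ),
        Ωbar (a, (v, l), (-v, -l)) (a', (v', l'), (-v', -l')) = a * l' - a' * l + Ω v v')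
    (hinvar : ∀ x y : ℝ × (V × ℝ) × (V × ℝ),
        x.2.2 = -x.2.1 → y.2.2 = -y.2.1 → Ωbar (D x) y + Ωbar x (D y) = 0) :
    D ((0 : ℝ), ((0 : V), (1 : ℝ)), ((0 : V), (1 : ℝ))) = 0 := by
  rcases hDH : D ((1:ℝ), ((0:V),(0:ℝ)), ((0:V),(0:ℝ))) with ⟨a, ⟨w, m⟩, ⟨w2, m2⟩⟩
  rcases hDP : D ((0:ℝ), ((0:V),(1:ℝ)), ((0:V),(-1:ℝ))) with ⟨c, ⟨u, n⟩, ⟨u2, n2⟩⟩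
  rcases hDK : D ((0:ℝ), ((0:V),(1:ℝ)), ((0:V),(1:ℝ))) with ⟨e, ⟨v, l⟩, ⟨v2, l2⟩⟩
  -- σ relation for H
  have sH := hσ ((1:ℝ), ((0:V),(0:ℝ)), ((0:V),(0:ℝ)))
  have hneg : gsigma ((1:ℝ), ((0:V),(0:ℝ)), ((0:V),(0:ℝ)))
      = -((1:ℝ), ((0:V),(0:ℝ)), ((0:V),(0:ℝ))) := by
    simp [gsigma, Prod.ext_iff]
  rw [hneg, map_neg, hDH] at sH
  simp only [gsigma, Prod.neg_mk, Prod.mk.injEq, neg_inj] at sH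
  obtain ⟨-, ⟨hw2, hm2⟩, -⟩ := sH
  -- σ relation for Ep
  have sP := hσ ((0:ℝ), ((0:V),(1:ℝ)), ((0:V),(-1:ℝ)))
  have hnegP : gsigma ((0:ℝ), ((0:V),(1:ℝ)), ((0:V),(-1:ℝ)))
      = -((0:ℝ), ((0:V),(1:ℝ)), ((0:V),(-1:ℝ))) := by
    simp [gsigma, Prod.ext_iff]
  rw [hnegP, map_neg, hDP] at sP
  simp only [gsigma, Prod.neg_mk, Prod.mk.injEq, neg_inj] at sP
  obtain ⟨-, ⟨hu2, hn2⟩, -⟩ := sP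
  -- σ relation for Ek
  have sK := hσ ((0:ℝ), ((0:V),(1:ℝ)), ((0:V),(1:ℝ)))
  have hfixK : gsigma ((0:ℝ), ((0:V),(1:ℝ)), ((0:V),(1:ℝ)))
      = ((0:ℝ), ((0:V),(1:ℝ)), ((0:V),(1:ℝ))) := by
    simp [gsigma, Prod.ext_iff]
  rw [hfixK, hDK] at sK
  simp only [gsigma, Prod.mk.injEq] at sK
  obtain ⟨he, ⟨hv2, hl2⟩, -⟩ := sK
  subst hw2 hm2 hu2 hn2 hv2 hl2
  have he0 : e = 0 := by linarith
  -- bracket equation [H, Ek] = Ep + Ep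
  have brHK : gbr Ω ((1:ℝ), ((0:V),(0:ℝ)), ((0:V),(0:ℝ))) ((0:ℝ), ((0:V),(1:ℝ)), ((0:V),(1:ℝ)))
      = ((0:ℝ), ((0:V),(1:ℝ)), ((0:V),(-1:ℝ))) + ((0:ℝ), ((0:V),(1:ℝ)), ((0:V),(-1:ℝ))) := by
    simp [gbr, Prod.ext_iff]; norm_num
  have E2 := hder ((1:ℝ), ((0:V),(0:ℝ)), ((0:V),(0:ℝ))) ((0:ℝ), ((0:V),(1:ℝ)), ((0:V),(1:ℝ)))
  rw [brHK, map_add, hDP, hDH, hDK] at E2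
  simp only [gbr, Prod.mk.injEq, Prod.mk_add_mk] at E2
  obtain ⟨-, ⟨E2a, E2b⟩, -⟩ := E2
  -- bracket equation [H, Ep] = Ek + Ek
  have brHP : gbr Ω ((1:ℝ), ((0:V),(0:ℝ)), ((0:V),(0:ℝ))) ((0:ℝ), ((0:V),(1:ℝ)), ((0:V),(-1:ℝ)))
      = ((0:ℝ), ((0:V),(1:ℝ)), ((0:V),(1:ℝ))) + ((0:ℝ), ((0:V),(1:ℝ)), ((0:V),(1:ℝ))) := by
    simp [gbr, Prod.ext_iff]; norm_num
  have E1 := hder ((1:ℝ), ((0:V),(0:ℝ)), ((0:V),(0:ℝ))) ((0:ℝ), ((0:V),(1:ℝ)), ((0:V),(-1:ℝ)))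
  rw [brHP, map_add, hDK, hDH, hDP] at E1
  simp only [gbr, Prod.mk.injEq, Prod.mk_add_mk] at E1
  obtain ⟨-, ⟨E1a, E1b⟩, -⟩ := E1
  -- invariance equation
  have E3 := hinvar ((1:ℝ), ((0:V),(0:ℝ)), ((0:V),(0:ℝ))) ((0:ℝ), ((0:V),(1:ℝ)), ((0:V),(-1:ℝ)))
      (by simp) (by simp)
  rw [hDH, hDP] at E3
  have hb1 : Ωbar (a, (w, m), (-w, -m)) ((0:ℝ), ((0:V),(1:ℝ)), ((0:V),(-1:ℝ)))
      = a := by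
    have := hΩbar a w m 0 0 1
    simpa using this
  have hb2 : Ωbar ((1:ℝ), ((0:V),(0:ℝ)), ((0:V),(0:ℝ))) (c, (u, n), (-u, -n))
      = n := by
    have := hΩbar 1 0 0 c u n
    simpa using this
  rw [hb1, hb2] at E3
  -- solve
  simp only [one_smul, smul_zero, zero_smul, map_zero, LinearMap.zero_apply,
    neg_zero, sub_zero, zero_sub, add_zero, zero_add, mul_one, mul_zero,
    one_mul, zero_mul, mul_neg, neg_neg] at E1a E1b E2a E2b
  have h4 : v + v + (v + v) = v := by rw [E1a]; exact E2a
  have h3 : (3:ℝ) • v = 0 := by linear_combination (norm := module) h4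
  have hv : v = 0 := by
    have := congrArg (fun x => (3:ℝ)⁻¹ • x) h3
    simpa [smul_smul] using this
  have hl : l = 0 := by linarith
  simp [Prod.ext_iff, he0, hv, hl]
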